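/- Δ_dec is a morphism of algebras for the balanced quasi-shuffle product: Δ_dec(u ∗_b v) = Δ_dec(u) (∗_b ⊗ ∗_b) Δ_dec(v) for all u, v ∈ ℚ⟨B⟩, i.e., (ℚ⟨B⟩, ∗_b, Δ_dec) is a bialgebra. -/

import Mathlib

/-!
Both sides satisfy the same recursion in the first letters of `u` and `v`. Deconcatenating a
word `a w` either splits off the empty prefix or keeps `a` at the front of the left factor, so
`Δ_dec(a x) = 1 ⊗ a x + (a· ⊗ id) Δ_dec(x)`. Applied to the three terms of `(a u) ∗_b (b v)`,
this turns `Δ_dec((a u) ∗_b (b v))`, by induction on `|u| + |v|`, into the expansion of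
`Δ_dec(a u) · Δ_dec(b v)` obtained by splitting off the empty prefixes of `a u` and `b v`.
-/

open TensorProduct

/-- `ℚ⟨B⟩`, modeled as finitely supported functions on words over `ℕ`. -/
abbrev QB : Type := List ℕ →₀ ℚ

/-- The balanced quasi-shuffle product of two words. -/
noncomputable def bqs : List ℕ → List ℕ → QB
  | [], w => Finsupp.single w 1
  | u@(_ :: _), [] => Finsupp.single u 1
  | i :: u, j :: v =>
      (bqs u (j :: v)).mapDomain (i :: ·) + (bqs (i :: u) v).mapDomain (j :: ·) +
        (if 1 ≤ i ∧ 1 ≤ j then (bqs u v).mapDomain ((i + j) :: ·) else 0)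
  termination_by u v => u.length + v.length

/-- The linear extension of the deconcatenation coproduct to `ℚ⟨B⟩`:
`Δ_dec(w) = ∑_{w = w₁w₂} w₁ ⊗ w₂`, extended linearly. -/
noncomputable def deltaDecL : QB →ₗ[ℚ] QB ⊗[ℚ] QB :=
  Finsupp.lsum ℚ fun w => LinearMap.toSpanSingleton ℚ _
    (∑ i ∈ Finset.range (w.length + 1),
      Finsupp.single (w.take i) (1 : ℚ) ⊗ₜ[ℚ] Finsupp.single (w.drop i) (1 : ℚ))

lemma bqs_nil_left (v : List ℕ) : bqs [] v = Finsupp.single v 1 := by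
  rw [bqs]

lemma bqs_nil_right (u : List ℕ) : bqs u [] = Finsupp.single u 1 := by
  cases u <;> rw [bqs]

lemma bqs_cons_cons (a b : ℕ) (u v : List ℕ) :
    bqs (a :: u) (b :: v) =
      (bqs u (b :: v)).mapDomain (a :: ·) + (bqs (a :: u) v).mapDomain (b :: ·) +
        (if 1 ≤ a ∧ 1 ≤ b then (bqs u v).mapDomain ((a + b) :: ·) else 0) := by
  rw [bqs]

lemma deltaDecL_single (w : List ℕ) :
    deltaDecL (Finsupp.single w 1) =
      ∑ i ∈ Finset.range (w.length + 1),
        Finsupp.single (w.take i) (1 : ℚ) ⊗ₜ[ℚ] Finsupp.single (w.drop i) (1 : ℚ) := by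
  simp [deltaDecL]

lemma deltaDecL_mapDomain_cons (a : ℕ) (x : QB) :
    deltaDecL (x.mapDomain (a :: ·)) =
      Finsupp.single [] 1 ⊗ₜ x.mapDomain (a :: ·) +
        (Finsupp.lmapDomain ℚ ℚ (a :: ·)).rTensor QB (deltaDecL x) := by
  induction x using Finsupp.induction_linear with
  | zero => simp
  | add x y hx hy =>
    rw [Finsupp.mapDomain_add, map_add, map_add, map_add, hx, hy, tmul_add]
    abel
  | single w r =>
    have hsingle : (Finsupp.single w r : QB) = r • Finsupp.single w 1 := by simp
    rw [hsingle, Finsupp.mapDomain_smul, map_smul, map_smul, map_smul, tmul_smul, ← smul_add,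
      Finsupp.mapDomain_single, deltaDecL_single, deltaDecL_single, map_sum, List.length_cons,
      Finset.sum_range_succ']
    simp [add_comm]

/-- The componentwise `∗_b`-product `Δ_dec(u) · Δ_dec(v)` in `ℚ⟨B⟩ ⊗ ℚ⟨B⟩`. -/
noncomputable def deltaDecMul (u v : List ℕ) : QB ⊗[ℚ] QB :=
  ∑ i ∈ Finset.range (u.length + 1), ∑ j ∈ Finset.range (v.length + 1),
    bqs (u.take i) (v.take j) ⊗ₜ bqs (u.drop i) (v.drop j)

lemma deltaDecMul_nil_left (v : List ℕ) :
    deltaDecMul [] v = deltaDecL (Finsupp.single v 1) := by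
  simp [deltaDecMul, deltaDecL_single, bqs_nil_left]

lemma deltaDecMul_nil_right (u : List ℕ) :
    deltaDecMul u [] = deltaDecL (Finsupp.single u 1) := by
  simp [deltaDecMul, deltaDecL_single, bqs_nil_right]

lemma deltaDecMul_cons_cons (a b : ℕ) (u v : List ℕ) :
    deltaDecMul (a :: u) (b :: v) =
      Finsupp.single [] 1 ⊗ₜ bqs (a :: u) (b :: v) +
        (Finsupp.lmapDomain ℚ ℚ (a :: ·)).rTensor QB (deltaDecMul u (b :: v)) +
        (Finsupp.lmapDomain ℚ ℚ (b :: ·)).rTensor QB (deltaDecMul (a :: u) v) +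
        (if 1 ≤ a ∧ 1 ≤ b then
          (Finsupp.lmapDomain ℚ ℚ ((a + b) :: ·)).rTensor QB (deltaDecMul u v) else 0) := by
  by_cases hab : 1 ≤ a ∧ 1 ≤ b <;>
  simp only [hab, and_self, if_true, if_false, add_zero, deltaDecMul, List.length_cons,
    Finset.sum_range_succ', List.take_succ_cons, List.drop_succ_cons, List.take_zero,
    List.drop_zero, bqs_nil_left, bqs_nil_right, bqs_cons_cons, map_sum, map_add,
    LinearMap.rTensor_tmul, Finsupp.lmapDomain_apply, Finsupp.mapDomain_single, tmul_add,
    add_tmul, Finset.sum_add_distrib] <;>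
  abel

theorem deltaDecL_bqs : ∀ u v : List ℕ, deltaDecL (bqs u v) = deltaDecMul u v
  | [], v => by rw [bqs_nil_left, deltaDecMul_nil_left]
  | a :: u, [] => by rw [bqs_nil_right, deltaDecMul_nil_right]
  | a :: u, b :: v => by
    rw [deltaDecMul_cons_cons, ← deltaDecL_bqs u (b :: v), ← deltaDecL_bqs (a :: u) v,
      ← deltaDecL_bqs u v, bqs_cons_cons]
    split_ifs <;>
      simp only [map_add, deltaDecL_mapDomain_cons, tmul_add, add_zero] <;> abel
  termination_by u v => u.length + v.length

/-- `Δ_dec` is an algebra morphism for the balanced quasi-shuffle product: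
`Δ_dec(u ∗_b v) = Δ_dec(u) · Δ_dec(v)`, where the product on `ℚ⟨B⟩ ⊗ ℚ⟨B⟩` is
componentwise `∗_b`.  (Stated on the word basis; both sides are bilinear.) -/
theorem stmt_10 (u v : List ℕ) :
    deltaDecL (bqs u v) =
      ∑ i ∈ Finset.range (u.length + 1), ∑ j ∈ Finset.range (v.length + 1),
        (bqs (u.take i) (v.take j)) ⊗ₜ[ℚ] (bqs (u.drop i) (v.drop j)) :=
  deltaDecL_bqs u v
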